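/- arXiv:2508.12702 — 9 statements merged into one kernel-verified Lean document; each statement's English description precedes it below -/
import Mathlib

section
/- Let N ≥ 1, let a, b be real numbers and let v, w be vectors in ℝ^N. Let M be the (N+1)×(N+1) real matrix given in block form by M = [[a·I_N, v], [wᵀ, b]], where I_N is the N×N identity matrix. Then the characteristic polynomial of M factors as χ_M(X) = (X − a)^{N−1} · ((X − a)(X − b) − wᵀv). -/
/-!
Write the characteristic matrix of `M` in block form `[[c • 1, B], [C, D]]` with `c = X - a`.
Right multiplication by `[[1, -B], [0, c • 1]]` clears the upper-right block, so
`c * χ_M = c ^ N * (c * (X - b) - wᵀv)`, and `c` cancels in the domain `ℝ[X]`.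
-/

open Polynomial

/-- The `(N+1) × (N+1)` arrowhead matrix with upper-left block `a • I_N`,
last column `v`, last row `wᵀ`, and bottom-right entry `b`. -/
def arrowhead (N : ℕ) (a b : ℝ) (v w : Fin N → ℝ) :
    Matrix (Fin N ⊕ Unit) (Fin N ⊕ Unit) ℝ :=
  Matrix.of fun i j =>
    match i, j with
    | Sum.inl i, Sum.inl j => if i = j then a else 0
    | Sum.inl i, Sum.inr _ => v i
    | Sum.inr _, Sum.inl j => w j
    | Sum.inr _, Sum.inr _ => b

namespace Matrix

variable {m n R : Type*} [Fintype m] [Fintype n] [DecidableEq m] [DecidableEq n] [CommRing R]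

theorem det_fromBlocks_smul_one₁₁_mul_pow (c : R) (B : Matrix m n R) (C : Matrix n m R)
    (D : Matrix n n R) :
    (fromBlocks (c • 1) B C D).det * c ^ Fintype.card n =
      c ^ Fintype.card m * (c • D - C * B).det := by
  have hmul : fromBlocks (c • 1) B C D * fromBlocks 1 (-B) 0 (c • 1) =
      fromBlocks (c • 1) 0 C (c • D - C * B) := by
    simp only [fromBlocks_multiply, Matrix.mul_one, Matrix.mul_zero, add_zero, Matrix.mul_neg,
      Matrix.smul_mul, Matrix.one_mul, Matrix.mul_smul, neg_add_cancel]
    rw [sub_eq_neg_add, add_comm]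
  simpa [det_fromBlocks_zero₂₁, det_fromBlocks_zero₁₂, det_smul] using congrArg det hmul

theorem charmatrix_smul_one (a : R) : charmatrix (a • 1 : Matrix n n R) = (X - C a) • 1 := by
  ext i j
  by_cases h : i = j
  · subst h
    simp [charmatrix_apply_eq]
  · simp [h]

end Matrix

open Matrix

theorem arrowhead_eq_fromBlocks (N : ℕ) (a b : ℝ) (v w : Fin N → ℝ) :
    arrowhead N a b v w =
      fromBlocks (a • 1) (replicateCol Unit v) (replicateRow Unit w) (of fun _ _ => b) := by
  ext (i | i) (j | j) <;> simp [arrowhead, one_apply]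

theorem arrowhead_charpoly (N : ℕ) (hN : 1 ≤ N) (a b : ℝ) (v w : Fin N → ℝ) :
    (arrowhead N a b v w).charpoly =
      (X - C a) ^ (N - 1) *
        ((X - C a) * (X - C b) - C (∑ j, w j * v j)) := by
  obtain ⟨k, rfl⟩ := Nat.exists_eq_add_of_le' hN
  have hdet := det_fromBlocks_smul_one₁₁_mul_pow (X - C a)
    (-(replicateCol Unit v).map C) (-(replicateRow Unit w).map C) (charmatrix (of fun _ _ => b))
  rw [← charmatrix_smul_one, ← charmatrix_fromBlocks, ← arrowhead_eq_fromBlocks,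
    Fintype.card_unique, pow_one, Fintype.card_fin] at hdet
  apply mul_right_cancel₀ (X_sub_C_ne_zero a)
  rw [charpoly, hdet, add_tsub_cancel_right]
  simp only [det_unique, Matrix.sub_apply, Matrix.smul_apply, charmatrix_apply_eq, of_apply,
    smul_eq_mul, Matrix.mul_neg, Matrix.neg_mul, neg_neg, mul_apply, map_apply,
    replicateRow_apply, replicateCol_apply, map_sum, C_mul]
  ring
end

section
/- Let N ≥ 1, let a, b be real numbers, let v, w be vectors in ℝ^N, and let M = [[a·I_N, v], [wᵀ, b]] be the corresponding (N+1)×(N+1) arrowhead matrix, regarded as a complex matrix. If λ ∈ ℂ satisfies (λ − a)(λ − b) = wᵀv, then λ is an eigenvalue of M. In particular, when the discriminant Δ = (a − b)² + 4·wᵀv is nonnegative, the two real numbers λ_± = ((a + b) ± √Δ)/2 are eigenvalues of M. -/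
/-- `μ` is an eigenvalue of the complex matrix `M`. -/
def IsEigenvalue {n : Type*} [Fintype n] [DecidableEq n]
    (M : Matrix n n ℂ) (μ : ℂ) : Prop :=
  ∃ x : n → ℂ, x ≠ 0 ∧ M.mulVec x = μ • x

/-- Any complex root `λ` of `(λ - a)(λ - b) = wᵀv` is an eigenvalue of the
arrowhead matrix (viewed as a complex matrix); in particular, when the
discriminant `Δ = (a - b)² + 4 wᵀv` is nonnegative, both real numbers
`((a + b) ± √Δ)/2` are eigenvalues. -/
theorem arrowhead_quadratic_eigenvalues (N : ℕ) (hN : 1 ≤ N) (a b : ℝ)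
    (v w : Fin N → ℝ) :
    (∀ lam : ℂ, (lam - (a : ℂ)) * (lam - (b : ℂ)) = ((∑ j, w j * v j : ℝ) : ℂ) →
        IsEigenvalue ((arrowhead N a b v w).map (Complex.ofReal)) lam) ∧
      (0 ≤ (a - b) ^ 2 + 4 * ∑ j, w j * v j →
        IsEigenvalue ((arrowhead N a b v w).map (Complex.ofReal))
          (((a + b + Real.sqrt ((a - b) ^ 2 + 4 * ∑ j, w j * v j)) / 2 : ℝ) : ℂ) ∧
        IsEigenvalue ((arrowhead N a b v w).map (Complex.ofReal))
          (((a + b - Real.sqrt ((a - b) ^ 2 + 4 * ∑ j, w j * v j)) / 2 : ℝ) : ℂ)) := by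
  have key : ∀ lam : ℂ, (lam - (a : ℂ)) * (lam - (b : ℂ)) = ((∑ j, w j * v j : ℝ) : ℂ) →
      IsEigenvalue ((arrowhead N a b v w).map (Complex.ofReal)) lam := by
    intro lam hlam
    push_cast at hlam
    by_cases hcase : lam = (a : ℂ) ∧ ∀ i, v i = 0
    · obtain ⟨hla, hv⟩ := hcase
      subst hla
      by_cases hab : (a : ℂ) = (b : ℂ)
      · refine ⟨Sum.elim 0 (fun _ => 1), ?_, ?_⟩
        · intro h; simpa using congrFun h (Sum.inr ())
        · funext i
          cases i with
          | inl i =>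
            simp [arrowhead, Matrix.mulVec, dotProduct,
              Fintype.sum_sum_type, hv i]
          | inr u =>
            simp [arrowhead, Matrix.mulVec, dotProduct,
              Fintype.sum_sum_type, ← hab]
      · refine ⟨Sum.elim (fun _ => 1) (fun _ => (∑ j, (w j : ℂ)) / ((a : ℂ) - b)), ?_, ?_⟩
        · intro h
          have := congrFun h (Sum.inl ⟨0, hN⟩)
          simpa using this
        · have hab' : (a : ℂ) - b ≠ 0 := sub_ne_zero.mpr hab
          funext i
          cases i with
          | inl i =>
            simp [arrowhead, Matrix.mulVec, dotProduct,
              Fintype.sum_sum_type, hv i, apply_ite (Complex.ofReal),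
              Finset.sum_ite_eq]
          | inr u =>
            simp only [arrowhead, Matrix.map_apply, Matrix.of_apply, Matrix.mulVec,
              dotProduct, Fintype.sum_sum_type, Sum.elim_inl, Sum.elim_inr,
              Finset.univ_unique, Finset.sum_const, Finset.card_singleton, one_smul,
              Pi.smul_apply, smul_eq_mul, mul_one]
            field_simp
            ring
    · refine ⟨Sum.elim (fun i => (v i : ℂ)) (fun _ => lam - a), ?_, ?_⟩
      · intro h
        push_neg at hcase
        by_cases hla : lam = (a : ℂ)
        · obtain ⟨i, hi⟩ := hcase hla
          have := congrFun h (Sum.inl i)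
          simp at this
          exact hi (by exact_mod_cast this)
        · have := congrFun h (Sum.inr ())
          simp at this
          exact hla (sub_eq_zero.mp this)
      · funext i
        cases i with
        | inl i =>
          simp only [arrowhead, Matrix.map_apply, Matrix.of_apply, Matrix.mulVec,
            dotProduct, Fintype.sum_sum_type, Sum.elim_inl, Sum.elim_inr,
            Finset.univ_unique, Finset.sum_const, Finset.card_singleton, one_smul,
            Pi.smul_apply, smul_eq_mul]
          simp only [apply_ite (Complex.ofReal), Complex.ofReal_zero, ite_mul,
            zero_mul, Finset.sum_ite_eq, Finset.mem_univ, if_true]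
          ring
        | inr u =>
          simp only [arrowhead, Matrix.map_apply, Matrix.of_apply, Matrix.mulVec,
            dotProduct, Fintype.sum_sum_type, Sum.elim_inl, Sum.elim_inr,
            Finset.univ_unique, Finset.sum_const, Finset.card_singleton, one_smul,
            Pi.smul_apply, smul_eq_mul]
          push_cast
          linear_combination -hlam
  refine ⟨key, fun hd => ⟨key _ ?_, key _ ?_⟩⟩ <;>
  · have hr := Real.sq_sqrt hd
    set r := Real.sqrt ((a - b) ^ 2 + 4 * ∑ j, w j * v j)
    first
    | exact_mod_cast (by linear_combination hr / 4 :
        (((a + b + r) / 2 : ℝ) - a) * (((a + b + r) / 2 : ℝ) - b) = ∑ j, w j * v j)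
    | exact_mod_cast (by linear_combination hr / 4 :
        (((a + b - r) / 2 : ℝ) - a) * (((a + b - r) / 2 : ℝ) - b) = ∑ j, w j * v j)
end

section
/- Let N ≥ 2, let a, b be real numbers, let v, w be vectors in ℝ^N, and let M = [[a·I_N, v], [wᵀ, b]] be the corresponding (N+1)×(N+1) arrowhead matrix, regarded as a complex matrix. Then every complex eigenvalue of M lies in the set {a, λ_+, λ_−}, where λ_± = ((a + b) ± √((a − b)² + 4·wᵀv))/2 are the two complex roots of the quadratic X² − (a + b)X + (ab − wᵀv). -/
/-- Every complex eigenvalue of the arrowhead matrix is either `a` or one of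
the two complex roots `λ_±` of the quadratic `X² - (a + b)X + (ab - wᵀv)`. -/
theorem arrowhead_eigenvalues_mem (N : ℕ) (hN : 2 ≤ N) (a b : ℝ)
    (v w : Fin N → ℝ) (μ : ℂ)
    (hμ : IsEigenvalue ((arrowhead N a b v w).map (Complex.ofReal)) μ) :
    μ = (a : ℂ) ∨
      μ ^ 2 - ((a : ℂ) + (b : ℂ)) * μ +
        ((a : ℂ) * (b : ℂ) - ((∑ j, w j * v j : ℝ) : ℂ)) = 0 := by
  obtain ⟨x, hx, hMx⟩ := hμ
  by_cases ha : μ = (a : ℂ)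
  · exact Or.inl ha
  right
  have h1 : ∀ i : Fin N, (a : ℂ) * x (Sum.inl i) + (v i : ℂ) * x (Sum.inr ()) = μ * x (Sum.inl i) := by
    intro i
    have := congrFun hMx (Sum.inl i)
    simpa [Matrix.mulVec, dotProduct, arrowhead, Fintype.sum_sum_type,
      apply_ite, Finset.sum_ite_eq, mul_comm] using this
  have h2 : (∑ j, (w j : ℂ) * x (Sum.inl j)) + (b : ℂ) * x (Sum.inr ()) = μ * x (Sum.inr ()) := by
    have := congrFun hMx (Sum.inr ())
    simpa [Matrix.mulVec, dotProduct, arrowhead, Fintype.sum_sum_type] using this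
  have hxi : ∀ i : Fin N, (μ - (a : ℂ)) * x (Sum.inl i) = (v i : ℂ) * x (Sum.inr ()) := by
    intro i; linear_combination (h1 i).symm
  have hlast : x (Sum.inr ()) ≠ 0 := by
    intro h0
    apply hx
    funext j
    rcases j with i | ⟨⟩
    · have := hxi i
      rw [h0, mul_zero] at this
      exact (mul_eq_zero.mp this).resolve_left (sub_ne_zero.mpr ha)
    · exact h0
  have key : (μ - (a : ℂ)) * ((∑ j, (w j : ℂ) * x (Sum.inl j)) + (b : ℂ) * x (Sum.inr ()))
      = (μ - (a : ℂ)) * (μ * x (Sum.inr ())) := by rw [h2]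
  have hsum : (μ - (a : ℂ)) * (∑ j, (w j : ℂ) * x (Sum.inl j))
      = (∑ j, (w j : ℂ) * (v j : ℂ)) * x (Sum.inr ()) := by
    rw [Finset.mul_sum, Finset.sum_mul]
    refine Finset.sum_congr rfl fun j _ => ?_
    linear_combination (w j : ℂ) * hxi j
  have hS : ((∑ j, w j * v j : ℝ) : ℂ) = ∑ j, (w j : ℂ) * (v j : ℂ) := by
    push_cast; rfl
  have hq : (μ ^ 2 - ((a : ℂ) + (b : ℂ)) * μ + ((a : ℂ) * (b : ℂ) - ((∑ j, w j * v j : ℝ) : ℂ)))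
      * x (Sum.inr ()) = 0 := by
    rw [hS]
    linear_combination -key + hsum
  rcases mul_eq_zero.mp hq with h | h
  · exact h
  · exact absurd h hlast
end

section
/- Consider the RDN system of ODEs τ_R·dR_i/dt = −R_i + (β·R_i + I_i)/(η + G) for i = 1,…,N and τ_G·dG/dt = −G + ∑_{j=1}^N w_j R_j, with parameters τ_R, τ_G > 0, η > 0, β ≥ 0, weights w_j > 0, inputs I_i ≥ 0 and T := ∑_{j=1}^N w_j I_j > 0. Then the system has exactly one equilibrium point (R*, G*) ∈ ℝ^{N+1} with G* > 0; it is given by G* = (−(η − β) + √((η − β)² + 4T))/2 and R_i* = I_i/(η − β + G*) = 2I_i/((η − β) + √((η − β)² + 4T)), and it satisfies R_i* ≥ 0 for all i. -/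
/-- `(R, G)` is an equilibrium of the RDN system
`τ_R dR_i/dt = -R_i + (β R_i + I_i)/(η + G)`,
`τ_G dG/dt = -G + ∑_j w_j R_j`: all time derivatives vanish (and `η + G ≠ 0`
so that the right-hand side is meaningful). -/
def IsRDNEquilibrium (N : ℕ) (β η : ℝ) (w I : Fin N → ℝ)
    (R : Fin N → ℝ) (G : ℝ) : Prop :=
  η + G ≠ 0 ∧ (∀ i, -R i + (β * R i + I i) / (η + G) = 0) ∧
    -G + ∑ j, w j * R j = 0

lemma rdn_main (N : ℕ) (β η : ℝ) (w I : Fin N → ℝ)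
    (hη : 0 < η) (hT : 0 < ∑ j, w j * I j) (hI : ∀ i, 0 ≤ I i)
    (R : Fin N → ℝ) (G : ℝ) (heq : IsRDNEquilibrium N β η w I R G) (hG : 0 < G) :
      G = (-(η - β) + Real.sqrt ((η - β) ^ 2 + 4 * ∑ j, w j * I j)) / 2 ∧
      (∀ i, R i = I i / (η - β + G)) ∧
      (∀ i, R i =
        2 * I i / ((η - β) + Real.sqrt ((η - β) ^ 2 + 4 * ∑ j, w j * I j))) ∧
      (∀ i, 0 ≤ R i) := by
  obtain ⟨hηG, hR, hGsum⟩ := heq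
  set T := ∑ j, w j * I j with hTdef
  set a := η - β with hadef
  set s := Real.sqrt (a ^ 2 + 4 * T) with hsdef
  have hs2 : s ^ 2 = a ^ 2 + 4 * T := Real.sq_sqrt (by nlinarith [sq_nonneg a])
  have hs0 : 0 ≤ s := Real.sqrt_nonneg _
  -- each R i satisfies R i * (a + G) = I i
  have hRi : ∀ i, R i * (a + G) = I i := by
    intro i
    have h := hR i
    have h' : (β * R i + I i) / (η + G) = R i := by linarith
    have h'' : β * R i + I i = R i * (η + G) := by
      field_simp at h'; linarith
    rw [hadef]; ring_nf; ring_nf at h''; linarith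
  -- sum equation: G * (a + G) = T
  have hGeq : G * (a + G) = T := by
    have h1 : ∑ j, w j * R j = G := by linarith
    have h2 : ∑ j, w j * (R j * (a + G)) = T := by
      rw [hTdef]; exact Finset.sum_congr rfl fun j _ => by rw [hRi j]
    have h3 : ∑ j, w j * (R j * (a + G)) = (∑ j, w j * R j) * (a + G) := by
      rw [Finset.sum_mul]; exact Finset.sum_congr rfl fun j _ => by ring
    rw [h3, h1] at h2; exact h2
  have haG : 0 < a + G := by nlinarith
  have hGval : G = (-a + s) / 2 := by
    have h1 : (2 * G + a - s) * (2 * G + a + s) = 0 := by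
      have : (2 * G + a) ^ 2 = s ^ 2 := by rw [hs2]; nlinarith
      nlinarith
    rcases mul_eq_zero.mp h1 with h | h
    · linarith
    · nlinarith
  have hRdiv : ∀ i, R i = I i / (η - β + G) := by
    intro i
    rw [← hadef, eq_div_iff (by linarith : a + G ≠ 0)]
    exact hRi i
  refine ⟨hGval, hRdiv, ?_, ?_⟩
  · intro i
    rw [hRdiv i, ← hadef]
    have h1 : a + G = (a + s) / 2 := by rw [hGval]; ring
    have h2 : (0:ℝ) < a + s := by nlinarith
    rw [h1]
    field_simp
  · intro i
    rw [hRdiv i, ← hadef]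
    exact div_nonneg (hI i) (le_of_lt haG)

/-- The RDN system with total weighted input `T = ∑ w_j I_j > 0` has exactly
one equilibrium with `G* > 0`; it is given by the explicit formulas
`G* = (-(η - β) + √((η - β)² + 4T))/2`,
`R_i* = I_i/(η - β + G*) = 2 I_i/((η - β) + √((η - β)² + 4T))`,
and satisfies `R_i* ≥ 0` for all `i`. -/
theorem rdn_unique_equilibrium (N : ℕ) (τR τG β η : ℝ) (w I : Fin N → ℝ)
    (hτR : 0 < τR) (hτG : 0 < τG) (hη : 0 < η) (hβ : 0 ≤ β)
    (hw : ∀ j, 0 < w j) (hI : ∀ i, 0 ≤ I i) (hT : 0 < ∑ j, w j * I j) :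
    (∃! p : (Fin N → ℝ) × ℝ, IsRDNEquilibrium N β η w I p.1 p.2 ∧ 0 < p.2) ∧
    ∀ R : Fin N → ℝ, ∀ G : ℝ, IsRDNEquilibrium N β η w I R G → 0 < G →
      G = (-(η - β) + Real.sqrt ((η - β) ^ 2 + 4 * ∑ j, w j * I j)) / 2 ∧
      (∀ i, R i = I i / (η - β + G)) ∧
      (∀ i, R i =
        2 * I i / ((η - β) + Real.sqrt ((η - β) ^ 2 + 4 * ∑ j, w j * I j))) ∧
      (∀ i, 0 ≤ R i) := by
  have main := rdn_main N β η w I hη hT hI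
  constructor
  · -- existence and uniqueness
    set T := ∑ j, w j * I j with hTdef
    set a := η - β with hadef
    set s := Real.sqrt (a ^ 2 + 4 * T) with hsdef
    have hs2 : s ^ 2 = a ^ 2 + 4 * T := Real.sq_sqrt (by nlinarith [sq_nonneg a])
    have hs0 : 0 ≤ s := Real.sqrt_nonneg _
    have habs : |a| < s := by
      have : |a| < Real.sqrt (a ^ 2 + 4 * T) := by
        rw [show a ^ 2 = |a| ^ 2 by rw [sq_abs]]
        exact Real.lt_sqrt (abs_nonneg a) |>.mpr (by nlinarith)
      exact this
    set Gs : ℝ := (-a + s) / 2 with hGsdef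
    have hGspos : 0 < Gs := by
      have := neg_abs_le a
      rw [hGsdef]; cases abs_cases a with
      | inl h => linarith [h.1]
      | inr h => linarith [h.1]
    have haGs : 0 < a + Gs := by
      have := neg_abs_le a
      rw [hGsdef]; cases abs_cases a with
      | inl h => linarith [h.1]
      | inr h => linarith [h.1]
    have hquad : Gs * (a + Gs) = T := by
      have : Gs * (a + Gs) = (s ^ 2 - a ^ 2) / 4 := by rw [hGsdef]; ring
      rw [this, hs2]; ring
    refine ⟨⟨fun i => I i / (a + Gs), Gs⟩, ⟨⟨?_, ?_, ?_⟩, hGspos⟩, ?_⟩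
    · show η + Gs ≠ 0; positivity
    · intro i
      show -(I i / (a + Gs)) + (β * (I i / (a + Gs)) + I i) / (η + Gs) = 0
      have h1 : a + Gs ≠ 0 := ne_of_gt haGs
      have h2 : η + Gs ≠ 0 := by positivity
      field_simp
      rw [hadef] at h1 ⊢
      ring_nf
    · show -Gs + ∑ j, w j * (I j / (a + Gs)) = 0
      have h3 : ∑ j, w j * (I j / (a + Gs)) = T / (a + Gs) := by
        rw [hTdef, Finset.sum_div]
        exact Finset.sum_congr rfl fun j _ => by ring
      rw [h3, ← hquad, mul_div_assoc, div_self (ne_of_gt haGs), mul_one]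
      ring
    · rintro ⟨R, G⟩ ⟨heq, hG⟩
      obtain ⟨hGval, hRdiv, _, _⟩ := main R G heq hG
      have hG' : G = Gs := hGval
      ext
      · simp only
        rw [hRdiv, hG', hadef]
      · exact hG'
  · intro R G heq hG
    exact main R G heq hG
end

section
/- Let η > 0, β ≥ 0, let I_i ≥ 0 with T := ∑_{j=1}^N w_j I_j > 0 and weights w_j > 0, and let G* = (−(η − β) + √((η − β)² + 4T))/2 and R_i* = I_i/(η − β + G*) be the unique positive-G equilibrium of the RDN system. Then for every i, the readout satisfies R_i*/G* = I_i/T = I_i/∑_{j=1}^N w_j I_j; that is, at the fixed point the ratios R_i*/G* exactly normalize the inputs. -/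
/-- At the unique positive-`G` fixed point of the RDN model, the readout
`R_i*/G*` equals the normalized input `I_i / ∑_j w_j I_j`. -/
theorem rdn_readout_normalizes (N : ℕ) (β η : ℝ) (w I : Fin N → ℝ)
    (hη : 0 < η) (hβ : 0 ≤ β) (hw : ∀ j, 0 < w j) (hI : ∀ i, 0 ≤ I i)
    (hT : 0 < ∑ j, w j * I j) :
    ∀ i : Fin N,
      (I i / (η - β +
          (-(η - β) + Real.sqrt ((η - β) ^ 2 + 4 * ∑ j, w j * I j)) / 2)) /
        ((-(η - β) + Real.sqrt ((η - β) ^ 2 + 4 * ∑ j, w j * I j)) / 2) =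
      I i / ∑ j, w j * I j := by
  intro i
  set T := ∑ j, w j * I j with hTdef
  set a := η - β with ha
  have hs : Real.sqrt (a ^ 2 + 4 * T) ^ 2 = a ^ 2 + 4 * T := by
    rw [Real.sq_sqrt]; nlinarith [sq_nonneg a]
  rw [div_div]
  congr 1
  nlinarith [hs]
end

section
/- Consider the input-free simplified RDN system τ·dR_i/dt = −R_i + β·R_i/(η + G), τ·dG/dt = −G + ∑_{j=1}^N R_j with τ > 0, η > 0, β > 0, and let J be the Jacobian of the vector field at the origin. If β < η then every eigenvalue of J is a negative real number, while if β > η then J has an eigenvalue that is a positive real number (namely (β − η)/(τη), with multiplicity N). -/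
/-- The vector field of the input-free simplified RDN system on
`(R_1, …, R_N, G)`: `dR_i/dt = (-R_i + β R_i/(η + G))/τ`,
`dG/dt = (-G + ∑_j R_j)/τ`. -/
noncomputable def rdnField (N : ℕ) (τ β η : ℝ) (x : (Fin N ⊕ Unit) → ℝ) :
    (Fin N ⊕ Unit) → ℝ :=
  fun i => match i with
  | Sum.inl i => (-x (Sum.inl i) + β * x (Sum.inl i) / (η + x (Sum.inr ()))) / τ
  | Sum.inr _ => (-x (Sum.inr ()) + ∑ j, x (Sum.inl j)) / τ

/-- The Jacobian matrix of `F` at `p`: the matrix of partial derivatives of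
the components of `F` with respect to the coordinates. -/
noncomputable def jacobian {n : Type*} [Fintype n] [DecidableEq n]
    (F : (n → ℝ) → n → ℝ) (p : n → ℝ) : Matrix n n ℝ :=
  Matrix.of fun i j => fderiv ℝ (fun x => F x i) p (Pi.single j 1)

/-! At the origin every `R_i` vanishes, so the `R`-equations do not depend on `G` to first
order and the Jacobian is block lower triangular: `((β - η)/(τη)) • 1` on the `R`-coordinates
and the scalar `-1/τ` on `G`. Its characteristic polynomial is `(X - (β - η)/(τη))^N (X + 1/τ)`,
and both claims are read off its roots. -/

open Polynomial Matrix

theorem isEigenvalue_iff_isRoot_charpoly {n : Type*} [Fintype n] [DecidableEq n]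
    (M : Matrix n n ℂ) (μ : ℂ) : IsEigenvalue M μ ↔ M.charpoly.IsRoot μ := by
  rw [← Matrix.charpoly_toLin', ← Module.End.hasEigenvalue_iff_isRoot_charpoly,
    Module.End.hasEigenvalue_iff, Submodule.ne_bot_iff]
  simp [IsEigenvalue, and_comm]

section BlockTriangular

variable {R m n : Type*} [Fintype m] [Fintype n] [DecidableEq m] [DecidableEq n] [CommRing R]
  (a d : R) (B : Matrix m n R)

theorem charpoly_fromBlocks_diagonal_zero₁₂ :
    (fromBlocks (diagonal fun _ : n => a) 0 B (diagonal fun _ : m => d)).charpoly =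
      (X - C a) ^ Fintype.card n * (X - C d) ^ Fintype.card m := by
  simp [charpoly_diagonal, Finset.prod_const]

theorem isRoot_charpoly_fromBlocks_diagonal_zero₁₂_iff [IsDomain R] {μ : R} :
    (fromBlocks (diagonal fun _ : n => a) 0 B (diagonal fun _ : m => d)).charpoly.IsRoot μ ↔
      (Nonempty n ∧ μ = a) ∨ (Nonempty m ∧ μ = d) := by
  rw [charpoly_fromBlocks_diagonal_zero₁₂]
  simp [sub_eq_zero, and_comm, Fintype.card_eq_zero_iff]

theorem rootMultiplicity_charpoly_fromBlocks_diagonal_zero₁₂ [IsDomain R] (had : a ≠ d) :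
    (fromBlocks (diagonal fun _ : n => a) 0 B (diagonal fun _ : m => d)).charpoly.rootMultiplicity
      a = Fintype.card n := by
  rw [charpoly_fromBlocks_diagonal_zero₁₂, rootMultiplicity_mul
      (mul_ne_zero (pow_ne_zero _ (X_sub_C_ne_zero a)) (pow_ne_zero _ (X_sub_C_ne_zero d))),
    rootMultiplicity_X_sub_C_pow, rootMultiplicity_eq_zero, add_zero]
  simp [sub_eq_zero, had]

end BlockTriangular

section Jacobian

variable {N : ℕ} {τ β η : ℝ}

local notation "π" => ContinuousLinearMap.proj (R := ℝ) (φ := fun _ : Fin N ⊕ Unit => ℝ)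

theorem hasFDerivAt_rdnField_inl_zero (hη : η ≠ 0) (i : Fin N) :
    HasFDerivAt (fun x => rdnField N τ β η x (Sum.inl i))
      (((β - η) / (τ * η)) • π (Sum.inl i)) 0 := by
  have hR := hasFDerivAt_apply (𝕜 := ℝ) (F' := fun _ : Fin N ⊕ Unit => ℝ) (Sum.inl i) 0
  have hG :=
    (hasFDerivAt_apply (𝕜 := ℝ) (F' := fun _ : Fin N ⊕ Unit => ℝ) (Sum.inr ()) 0).const_add η
  have hGinv := (hasDerivAt_inv hη).comp_hasFDerivAt_of_eq (0 : Fin N ⊕ Unit → ℝ) hG (by simp)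
  have hF := (hR.neg.add ((hR.const_mul β).mul hGinv)).mul_const τ⁻¹
  refine (hF.congr_fderiv ?_).congr_of_eventuallyEq (.of_forall fun x => ?_)
  · ext x
    simp
    field_simp
    ring
  · simp [rdnField, div_eq_mul_inv, mul_assoc]

theorem hasFDerivAt_rdnField_inr (p : Fin N ⊕ Unit → ℝ) :
    HasFDerivAt (fun x => rdnField N τ β η x (Sum.inr ()))
      (τ⁻¹ • (∑ j, π (Sum.inl j) - π (Sum.inr ()))) p := by
  have hG := hasFDerivAt_apply (𝕜 := ℝ) (F' := fun _ : Fin N ⊕ Unit => ℝ) (Sum.inr ()) p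
  have hS := HasFDerivAt.fun_sum (u := Finset.univ) fun j _ =>
    hasFDerivAt_apply (𝕜 := ℝ) (F' := fun _ : Fin N ⊕ Unit => ℝ) (Sum.inl j) p
  refine (((hG.neg.add hS).mul_const τ⁻¹).congr_fderiv ?_).congr_of_eventuallyEq
    (.of_forall fun x => ?_)
  · ext x
    simp
    ring
  · simp [rdnField, div_eq_mul_inv]

theorem jacobian_rdnField_zero (hη : η ≠ 0) :
    jacobian (rdnField N τ β η) 0 =
      fromBlocks (diagonal fun _ => (β - η) / (τ * η)) 0 (of fun _ _ => τ⁻¹)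
        (diagonal fun _ => -τ⁻¹) := by
  ext (i | _) (j | _) <;>
    simp [jacobian, (hasFDerivAt_rdnField_inl_zero hη _).fderiv,
      (hasFDerivAt_rdnField_inr 0).fderiv, diagonal_apply, Pi.single_apply]

end Jacobian

theorem rdn_origin_stability_general (N : ℕ) (hN : 1 ≤ N) (τ β η : ℝ)
    (hτ : 0 < τ) (hη : 0 < η) :
    (β < η → ∀ μ : ℂ,
      IsEigenvalue ((jacobian (rdnField N τ β η) 0).map Complex.ofReal) μ →
        μ.im = 0 ∧ μ.re < 0) ∧
    (η < β →
      IsEigenvalue ((jacobian (rdnField N τ β η) 0).map Complex.ofReal)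
          (((β - η) / (τ * η) : ℝ) : ℂ) ∧
        0 < (β - η) / (τ * η) ∧
        (jacobian (rdnField N τ β η) 0).charpoly.rootMultiplicity
          ((β - η) / (τ * η)) = N) := by
  have hJ := jacobian_rdnField_zero (N := N) (τ := τ) (β := β) hη.ne'
  have hJℂ : (jacobian (rdnField N τ β η) 0).map Complex.ofReal =
      fromBlocks (diagonal fun _ => (((β - η) / (τ * η) : ℝ) : ℂ)) 0
        ((of fun _ _ => τ⁻¹).map Complex.ofReal) (diagonal fun _ => ((-τ⁻¹ : ℝ) : ℂ)) := by
    rw [hJ, fromBlocks_map, diagonal_map Complex.ofReal_zero, diagonal_map Complex.ofReal_zero,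
      Matrix.map_zero _ Complex.ofReal_zero]
  have hspec (μ : ℂ) :
      IsEigenvalue ((jacobian (rdnField N τ β η) 0).map Complex.ofReal) μ ↔
        (Nonempty (Fin N) ∧ μ = (((β - η) / (τ * η) : ℝ) : ℂ)) ∨ μ = ((-τ⁻¹ : ℝ) : ℂ) := by
    rw [isEigenvalue_iff_isRoot_charpoly, hJℂ, isRoot_charpoly_fromBlocks_diagonal_zero₁₂_iff,
      and_iff_right (⟨()⟩ : Nonempty Unit)]
  have hτη : 0 < τ * η := mul_pos hτ hη
  refine ⟨fun hβη μ hμ => ?_, fun hηβ => ⟨?_, ?_, ?_⟩⟩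
  · rcases (hspec μ).1 hμ with ⟨-, rfl⟩ | rfl
    · exact ⟨Complex.ofReal_im _, div_neg_of_neg_of_pos (sub_neg.2 hβη) hτη⟩
    · exact ⟨Complex.ofReal_im _, neg_neg_of_pos (inv_pos.2 hτ)⟩
  · exact (hspec _).2 (Or.inl ⟨⟨⟨0, hN⟩⟩, rfl⟩)
  · exact div_pos (sub_pos.2 hηβ) hτη
  · rw [hJ, rootMultiplicity_charpoly_fromBlocks_diagonal_zero₁₂, Fintype.card_fin]
    have hlt : -τ⁻¹ < (β - η) / (τ * η) := by
      linarith [div_pos (sub_pos.2 hηβ) hτη, inv_pos.2 hτ]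
    exact hlt.ne'

/-- For the Jacobian `J` of the input-free simplified RDN system at the
origin: if `β < η` then every (complex) eigenvalue of `J` is a negative real
number, while if `β > η` then `J` has a positive real eigenvalue, namely
`(β - η)/(τη)`, with multiplicity `N`. -/
theorem rdn_origin_stability (N : ℕ) (hN : 1 ≤ N) (τ β η : ℝ)
    (hτ : 0 < τ) (hη : 0 < η) (hβ : 0 < β) :
    (β < η → ∀ μ : ℂ,
      IsEigenvalue ((jacobian (rdnField N τ β η) 0).map Complex.ofReal) μ →
        μ.im = 0 ∧ μ.re < 0) ∧
    (η < β →
      IsEigenvalue ((jacobian (rdnField N τ β η) 0).map Complex.ofReal)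
          (((β - η) / (τ * η) : ℝ) : ℂ) ∧
        0 < (β - η) / (τ * η) ∧
        (jacobian (rdnField N τ β η) 0).charpoly.rootMultiplicity
          ((β - η) / (τ * η)) = N) :=
  rdn_origin_stability_general N hN τ β η hτ hη
end

section
/- Let τ > 0, η > 0, β ≥ 0, let w_1,…,w_N > 0, and let R_1,…,R_N : ℝ → ℝ and G : ℝ → ℝ be differentiable functions such that η + G(t) ≠ 0 and τ·R_i′(t) = −R_i(t) + β·R_i(t)/(η + G(t)) for all i and all t (the input-free RDN excitatory dynamics). Define S(t) = ∑_{j=1}^N w_j R_j(t) and, on the set where S(t) ≠ 0, define ρ_i(t) = w_i·R_i(t)/S(t). Then ρ_i′(t) = 0 for every i and every t with S(t) ≠ 0; that is, the normalized proportions ρ_i are constant along any input-free trajectory. -/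
/-!
Without input, every `R_i` grows at the same instantaneous rate `k(t) = (β/(η + G t) - 1)/τ`.
Hence the numerator `w_i R_i` and the total `S` both satisfy `f' = k f`, and the quotient rule
gives `ρ_i' = (k w_i R_i S - w_i R_i k S)/S² = 0`.
-/

noncomputable def rdnGrowthRate (τ β η : ℝ) (G : ℝ → ℝ) (t : ℝ) : ℝ :=
  (β / (η + G t) - 1) / τ

theorem hasDerivAt_rdnGrowthRate {τ β η : ℝ} {G f : ℝ → ℝ} {t : ℝ} (hτ : τ ≠ 0)
    (hf : DifferentiableAt ℝ f t) (hode : τ * deriv f t = -f t + β * f t / (η + G t)) :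
    HasDerivAt f (rdnGrowthRate τ β η G t * f t) t := by
  have hrate : deriv f t = rdnGrowthRate τ β η G t * f t := by
    rw [rdnGrowthRate, div_mul_eq_mul_div, eq_div_iff hτ]
    linear_combination hode
  exact hrate ▸ hf.hasDerivAt

theorem hasDerivAt_sum_of_common_rate {ι : Type*} (u : Finset ι) (w : ι → ℝ) {R : ι → ℝ → ℝ}
    {k t : ℝ} (hR : ∀ j, HasDerivAt (R j) (k * R j t) t) :
    HasDerivAt (fun s => ∑ j ∈ u, w j * R j s) (k * ∑ j ∈ u, w j * R j t) t := by
  rw [Finset.mul_sum]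
  refine HasDerivAt.fun_sum fun j _ => ?_
  rw [mul_left_comm]
  exact (hR j).const_mul (w j)

theorem hasDerivAt_div_of_common_rate {f g : ℝ → ℝ} {k t : ℝ} (hf : HasDerivAt f (k * f t) t)
    (hg : HasDerivAt g (k * g t) t) (hgt : g t ≠ 0) :
    HasDerivAt (fun s => f s / g s) 0 t := by
  have hquot := hf.fun_div hg hgt
  rwa [show k * f t * g t - f t * (k * g t) = 0 by ring, zero_div] at hquot

theorem rdn_proportions_constant_general (N : ℕ) (τ β η : ℝ) (w : Fin N → ℝ)
    (hτ : 0 < τ)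
    (R : Fin N → ℝ → ℝ) (G : ℝ → ℝ)
    (hRdiff : ∀ i, Differentiable ℝ (R i))
    (hode : ∀ i, ∀ t : ℝ,
      τ * deriv (R i) t = -R i t + β * R i t / (η + G t)) :
    ∀ i, ∀ t : ℝ, (∑ j, w j * R j t) ≠ 0 →
      deriv (fun s => w i * R i s / ∑ j, w j * R j s) t = 0 := by
  intro i t hS
  have hrate : ∀ j, HasDerivAt (R j) (rdnGrowthRate τ β η G t * R j t) t := fun j =>
    hasDerivAt_rdnGrowthRate hτ.ne' (hRdiff j t) (hode j t)
  have hnum := (hrate i).const_mul (w i)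
  rw [mul_left_comm] at hnum
  exact (hasDerivAt_div_of_common_rate hnum
    (hasDerivAt_sum_of_common_rate Finset.univ w hrate) hS).deriv

/-- Along any trajectory of the input-free RDN excitatory dynamics
`τ R_i' = -R_i + β R_i/(η + G)`, the normalized proportions
`ρ_i = w_i R_i / S` (with `S = ∑_j w_j R_j`) are constant: `ρ_i' = 0`
wherever `S ≠ 0`. -/
theorem rdn_proportions_constant (N : ℕ) (τ β η : ℝ) (w : Fin N → ℝ)
    (hτ : 0 < τ) (hη : 0 < η) (hβ : 0 ≤ β) (hw : ∀ j, 0 < w j)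
    (R : Fin N → ℝ → ℝ) (G : ℝ → ℝ)
    (hRdiff : ∀ i, Differentiable ℝ (R i)) (hGdiff : Differentiable ℝ G)
    (hG : ∀ t, η + G t ≠ 0)
    (hode : ∀ i, ∀ t : ℝ,
      τ * deriv (R i) t = -R i t + β * R i t / (η + G t)) :
    ∀ i, ∀ t : ℝ, (∑ j, w j * R j t) ≠ 0 →
      deriv (fun s => w i * R i s / ∑ j, w j * R j s) t = 0 :=
  rdn_proportions_constant_general N τ β η w hτ R G hRdiff hode
end

section
/- Let τ > 0, η > 0, β ≥ 0, let w_1,…,w_N > 0 and I_1,…,I_N ∈ ℝ, and let R_1,…,R_N : ℝ → ℝ and G : ℝ → ℝ be differentiable functions such that η + G(t) ≠ 0 and τ·R_i′(t) = −R_i(t) + (β·R_i(t) + I_i)/(η + G(t)) for all i and all t. Define S(t) = ∑_{j=1}^N w_j R_j(t) and, where S(t) ≠ 0, ρ_i(t) = w_i·R_i(t)/S(t). Then for every i and every t with S(t) ≠ 0, τ·ρ_i′(t) = w_i·( I_i/(S(t)(η + G(t))) − R_i(t)·(∑_{j=1}^N w_j I_j)/(S(t)²(η + G(t))) ). -/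
/-!
The right-hand side `-x + (β x + a)/E` of the RDN equation is affine in the pair `(x, a)`, so the
weighted total `S` obeys the same equation with input `∑ w_j I_j`. In the quotient rule for
`w_i R_i / S`, the leak `-x` and the self-excitation `β x / E` then contribute identical terms to
`R_i' S` and `R_i S'`, and only the inputs survive.
-/

open Finset

lemma sum_rdn_rhs {ι : Type*} (s : Finset ι) (τ β E : ℝ) (w x x' a : ι → ℝ)
    (h : ∀ j ∈ s, τ * x' j = -x j + (β * x j + a j) / E) :
    τ * ∑ j ∈ s, w j * x' j =
      -∑ j ∈ s, w j * x j + (β * ∑ j ∈ s, w j * x j + ∑ j ∈ s, w j * a j) / E := by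
  calc τ * ∑ j ∈ s, w j * x' j = ∑ j ∈ s, w j * (-x j + (β * x j + a j) / E) := by
        rw [mul_sum]
        exact sum_congr rfl fun j hj => by rw [← h j hj]; ring
    _ = _ := by
        rw [mul_sum, ← sum_add_distrib, sum_div, ← sum_neg_distrib, ← sum_add_distrib]
        exact sum_congr rfl fun j _ => by ring

lemma rdn_ratio_deriv {r s : ℝ → ℝ} {r' s' t : ℝ} (τ β E a k c : ℝ)
    (hr : HasDerivAt r r' t) (hs : HasDerivAt s s' t) (hst : s t ≠ 0)
    (hr_ode : τ * r' = -r t + (β * r t + a) / E)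
    (hs_ode : τ * s' = -s t + (β * s t + k) / E) :
    τ * deriv (fun x => c * r x / s x) t =
      c * (a / (s t * E) - r t * k / (s t ^ 2 * E)) := by
  rw [((hr.const_mul c).fun_div hs hst).deriv]
  calc τ * ((c * r' * s t - c * r t * s') / s t ^ 2)
      = c * ((τ * r') * s t - r t * (τ * s')) / s t ^ 2 := by ring
    _ = _ := by
        rw [hr_ode, hs_ode]
        field_simp
        ring

theorem rdn_proportions_derivative_general (N : ℕ) (τ β η : ℝ) (w I : Fin N → ℝ)
    (R : Fin N → ℝ → ℝ) (G : ℝ → ℝ)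
    (hRdiff : ∀ i, Differentiable ℝ (R i))
    (hode : ∀ i, ∀ t : ℝ,
      τ * deriv (R i) t = -R i t + (β * R i t + I i) / (η + G t)) :
    ∀ i, ∀ t : ℝ, (∑ j, w j * R j t) ≠ 0 →
      τ * deriv (fun s => w i * R i s / ∑ j, w j * R j s) t =
        w i * (I i / ((∑ j, w j * R j t) * (η + G t)) -
          R i t * (∑ j, w j * I j) /
            ((∑ j, w j * R j t) ^ 2 * (η + G t))) := by
  intro i t hS
  have hSderiv : HasDerivAt (fun s => ∑ j, w j * R j s) (∑ j, w j * deriv (R j) t) t :=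
    HasDerivAt.fun_sum fun j _ => ((hRdiff j t).hasDerivAt).const_mul (w j)
  exact rdn_ratio_deriv τ β (η + G t) (I i) (∑ j, w j * I j) (w i)
    (hRdiff i t).hasDerivAt hSderiv hS (hode i t)
    (sum_rdn_rhs univ τ β (η + G t) w (R · t) (fun j => deriv (R j) t) I fun j _ => hode j t)

/-- Along any trajectory of the RDN excitatory dynamics with inputs,
`τ R_i' = -R_i + (β R_i + I_i)/(η + G)`, the normalized proportions
`ρ_i = w_i R_i / S` (with `S = ∑_j w_j R_j`) satisfy
`τ ρ_i' = w_i (I_i/(S(η+G)) - R_i (∑_j w_j I_j)/(S²(η+G)))`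
wherever `S ≠ 0`. -/
theorem rdn_proportions_derivative (N : ℕ) (τ β η : ℝ) (w I : Fin N → ℝ)
    (hτ : 0 < τ) (hη : 0 < η) (hβ : 0 ≤ β) (hw : ∀ j, 0 < w j)
    (R : Fin N → ℝ → ℝ) (G : ℝ → ℝ)
    (hRdiff : ∀ i, Differentiable ℝ (R i)) (hGdiff : Differentiable ℝ G)
    (hG : ∀ t, η + G t ≠ 0)
    (hode : ∀ i, ∀ t : ℝ,
      τ * deriv (R i) t = -R i t + (β * R i t + I i) / (η + G t)) :
    ∀ i, ∀ t : ℝ, (∑ j, w j * R j t) ≠ 0 →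
      τ * deriv (fun s => w i * R i s / ∑ j, w j * R j s) t =
        w i * (I i / ((∑ j, w j * R j t) * (η + G t)) -
          R i t * (∑ j, w j * I j) /
            ((∑ j, w j * R j t) ^ 2 * (η + G t))) :=
  rdn_proportions_derivative_general N τ β η w I R G hRdiff hode
end

section
/- Let τ > 0, η > 0, β > 0 and G* > 0 be real numbers with η + G* > β, and set a = (−1 + β/(η + G*))/τ. Then a < 0, and both complex roots of the quadratic polynomial z² − (a − 1/τ)·z + ( G*/((η + G*)·τ²) − a/τ ) have strictly negative real part. Equivalently, both numbers λ_± = ( (a − 1/τ) ± √( (a + 1/τ)² − 4G*/((η + G*)τ²) ) )/2 (interpreted as complex numbers when the discriminant is negative) satisfy Re(λ_±) < 0. -/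
lemma hurwitz_quad (b c : ℝ) (hb : b < 0) (hc : 0 < c) (z : ℂ)
    (hz : z ^ 2 - (b : ℂ) * z + (c : ℂ) = 0) : z.re < 0 := by
  set x := z.re with hx
  set y := z.im with hy
  have hre := congrArg Complex.re hz
  have him := congrArg Complex.im hz
  simp [Complex.add_re, Complex.sub_re, Complex.mul_re, Complex.mul_im,
    Complex.add_im, Complex.sub_im, pow_two, ← hx, ← hy] at hre him
  by_cases hy0 : y = 0
  · rw [hy0] at hre
    nlinarith [sq_nonneg x]
  · have : y * (2 * x - b) = 0 := by ring_nf; ring_nf at him; linarith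
    have h2 : 2 * x - b = 0 := by
      rcases mul_eq_zero.mp this with h | h
      · exact absurd h hy0
      · exact h
    linarith

/-- Hurwitz property of the quadratic governing the nontrivial Jacobian
eigenvalues of the simplified RDN system at its equilibrium: with
`a = (-1 + β/(η + G*))/τ` and `η + G* > β`, we have `a < 0` and both complex
roots of `z² - (a - 1/τ) z + (G*/((η + G*)τ²) - a/τ)` have strictly negative
real part. -/
theorem rdn_lambda_pm_negative (τ η β G : ℝ)
    (hτ : 0 < τ) (hη : 0 < η) (hβ : 0 < β) (hG : 0 < G)
    (hlt : β < η + G) :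
    ((-1 + β / (η + G)) / τ < 0) ∧
      ∀ z : ℂ, z ^ 2 - (((-1 + β / (η + G)) / τ - 1 / τ : ℝ) : ℂ) * z +
          ((G / ((η + G) * τ ^ 2) - ((-1 + β / (η + G)) / τ) / τ : ℝ) : ℂ) = 0 →
        z.re < 0 := by
  have hs : 0 < η + G := by linarith
  have ha : (-1 + β / (η + G)) / τ < 0 := by
    apply div_neg_of_neg_of_pos _ hτ
    have : β / (η + G) < 1 := (div_lt_one hs).mpr hlt
    linarith
  refine ⟨ha, fun z hz => ?_⟩
  have hb : (-1 + β / (η + G)) / τ - 1 / τ < 0 := by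
    have : (0:ℝ) < 1 / τ := by positivity
    linarith
  have hc : 0 < G / ((η + G) * τ ^ 2) - ((-1 + β / (η + G)) / τ) / τ := by
    have h1 : (0:ℝ) < G / ((η + G) * τ ^ 2) := by positivity
    have h2 : ((-1 + β / (η + G)) / τ) / τ < 0 := div_neg_of_neg_of_pos ha hτ
    linarith
  exact hurwitz_quad _ _ hb hc z hz
end
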